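/- With notation as above (decreasing δε data ℓ_i, j_k, T_b, and b_e defined by ℓ_{i,b_e} = 2⌊ℓ_i/2⌋), the following identity holds in the free ℤ-module on ε_1,...,ε_m, δ_1,...,δ_{2n}: r_b = r_{b_e} + Σ_{k ∈ T_b} r_{odd,b,k}, where r_b = Σ_{1≤i≤m, 1≤j≤ℓ_i} (δ_j - ε_i), r_{b_e} = Σ_{1≤i≤m, 1≤j≤ℓ_{i,b_e}} (δ_j - ε_i), and r_{odd,b,k} = (j_{2k-1} - j_{2k}) δ_{2k-1} - Σ_{i = m - j_{2k-1} + 1}^{m - j_{2k}} ε_i. -/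

import Mathlib

/-!
Split each row `j ≤ ℓ_i` as `j ≤ 2⌊ℓ_i/2⌋` plus, when `ℓ_i = 2k - 1` is odd, the single extra
term `δ_{2k-1} - ε_i`. Regroup these extra terms by `k`: since `ℓ` is increasing, the rows with
`ℓ_i = 2k - 1` are exactly `m - j_{2k-1} < i ≤ m - j_{2k}`, there are `j_{2k-1} - j_{2k}` of them,
and the levels `k ∉ T_b` have none.
-/

open Finset

/-- Basis vector `ε_i` of the free module on `ε_1,...,ε_m, δ_1,...,δ_{2n}`. -/
def epsv (m n : ℕ) (i : Fin m) : (Fin m ⊕ Fin (2 * n)) → ℤ :=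
  Pi.single (Sum.inl i) 1

/-- Basis vector `δ_j`. -/
def deltav (m n : ℕ) (j : Fin (2 * n)) : (Fin m ⊕ Fin (2 * n)) → ℤ :=
  Pi.single (Sum.inr j) 1

/-- `j_k = #{i : ℓ_i ≥ k}`. -/
def jb (m : ℕ) (ℓ : Fin m → ℕ) (k : ℕ) : ℕ :=
  (univ.filter (fun i : Fin m => k ≤ ℓ i)).card

theorem sum_filter_lt_eq_sum_filter_lt_two_mul_half_add {M : Type*} [AddCommMonoid M] {n : ℕ}
    (f : Fin (2 * n) → M) (l : ℕ) :
    ∑ j ∈ univ.filter (fun j : Fin (2 * n) => (j : ℕ) < l), f j =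
      ∑ j ∈ univ.filter (fun j : Fin (2 * n) => (j : ℕ) < 2 * (l / 2)), f j +
      ∑ k ∈ univ.filter (fun k : Fin n => l = 2 * (k : ℕ) + 1),
        f ⟨2 * (k : ℕ), by omega⟩ := by
  obtain ⟨t, rfl | rfl⟩ := Nat.even_or_odd' l
  · have hk : univ.filter (fun k : Fin n => 2 * t = 2 * (k : ℕ) + 1) = ∅ := by
      ext k
      simp only [mem_filter, mem_univ, true_and, notMem_empty, iff_false]
      omega
    simp [hk]
  by_cases ht : t < n
  · have hj : univ.filter (fun j : Fin (2 * n) => (j : ℕ) < 2 * t + 1) =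
        insert ⟨2 * t, by omega⟩
          (univ.filter fun j : Fin (2 * n) => (j : ℕ) < 2 * ((2 * t + 1) / 2)) := by
      ext j
      simp only [mem_filter, mem_univ, true_and, mem_insert, Fin.ext_iff]
      omega
    have hk : univ.filter (fun k : Fin n => 2 * t + 1 = 2 * (k : ℕ) + 1) = {⟨t, ht⟩} := by
      ext k
      simp only [mem_filter, mem_univ, true_and, mem_singleton, Fin.ext_iff]
      omega
    rw [hj, hk, sum_insert (by simp; omega), sum_singleton, add_comm]
  · have hj : univ.filter (fun j : Fin (2 * n) => (j : ℕ) < 2 * t + 1) =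
        univ.filter fun j : Fin (2 * n) => (j : ℕ) < 2 * ((2 * t + 1) / 2) := by
      ext j
      simp only [mem_filter, mem_univ, true_and]
      omega
    have hk : univ.filter (fun k : Fin n => 2 * t + 1 = 2 * (k : ℕ) + 1) = ∅ := by
      ext k
      simp only [mem_filter, mem_univ, true_and, notMem_empty, iff_false]
      omega
    rw [hj, hk, sum_empty, add_zero]

section

variable {m : ℕ} {ℓ : Fin m → ℕ}

theorem jb_le (ℓ : Fin m → ℕ) (c : ℕ) : jb m ℓ c ≤ m :=
  (card_filter_le _ _).trans_eq (card_fin m)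

theorem le_iff_sub_jb_le (hℓ : Monotone ℓ) (c : ℕ) (i : Fin m) :
    c ≤ ℓ i ↔ m - jb m ℓ c ≤ i := by
  have hjb := jb_le ℓ c
  constructor
  · intro hi
    have hsub : Ici i ⊆ univ.filter (fun i' : Fin m => c ≤ ℓ i') := fun i' hi' =>
      mem_filter.2 ⟨mem_univ _, hi.trans (hℓ (mem_Ici.1 hi'))⟩
    have hcard := card_le_card hsub
    rw [Fin.card_Ici] at hcard
    unfold jb
    omega
  · intro hi
    by_contra! hlt
    have hsub : univ.filter (fun i' : Fin m => c ≤ ℓ i') ⊆ Ioi i := fun i' hi' => by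
      rw [mem_Ioi]
      by_contra! h
      exact hlt.not_ge ((mem_filter.1 hi').2.trans (hℓ h))
    have hcard := card_le_card hsub
    rw [Fin.card_Ioi] at hcard
    unfold jb at hi hjb
    omega

theorem card_filter_eq_add_jb_succ (ℓ : Fin m → ℕ) (c : ℕ) :
    #(univ.filter (fun i : Fin m => ℓ i = c)) + jb m ℓ (c + 1) = jb m ℓ c := by
  rw [jb, jb, ← card_filter_add_card_filter_not (s := univ.filter fun i : Fin m => c ≤ ℓ i)
    (fun i => ℓ i = c), filter_filter, filter_filter]
  congr 2 <;> ext i <;> simp only [mem_filter, mem_univ, true_and] <;> omega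

theorem filter_eq_eq_filter_sub_jb (hℓ : Monotone ℓ) (c : ℕ) :
    univ.filter (fun i : Fin m => ℓ i = c) =
      univ.filter (fun i : Fin m => m - jb m ℓ c ≤ (i : ℕ) ∧ (i : ℕ) < m - jb m ℓ (c + 1)) := by
  ext i
  have h₁ := le_iff_sub_jb_le hℓ c i
  have h₂ := le_iff_sub_jb_le hℓ (c + 1) i
  simp only [mem_filter, mem_univ, true_and]
  omega

theorem sum_filter_eq_sub_eq_jb_smul_sub (hℓ : Monotone ℓ) {M : Type*} [AddCommGroup M] (x : M)
    (g : Fin m → M) (c : ℕ) :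
    ∑ i ∈ univ.filter (fun i : Fin m => ℓ i = c), (x - g i) =
      ((jb m ℓ c : ℤ) - jb m ℓ (c + 1)) • x -
        ∑ i ∈ univ.filter (fun i : Fin m =>
          m - jb m ℓ c ≤ (i : ℕ) ∧ (i : ℕ) < m - jb m ℓ (c + 1)), g i := by
  have hcard := card_filter_eq_add_jb_succ ℓ c
  rw [sum_sub_distrib, sum_const, ← filter_eq_eq_filter_sub_jb hℓ, ← natCast_zsmul]
  congr 2
  omega

end

/-- `r_b = r_{b_e} + Σ_{k ∈ T_b} r_{odd,b,k}` in the free `ℤ`-module on the ε's and δ's.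
Here `Fin` indices are 0-based: `k : Fin n` represents the 1-based index `k+1`, so
`δ_{2(k+1)-1}` is `deltav` at index `2k`, and the 1-based `ε`-range
`m - j_{2k-1} + 1 ≤ i ≤ m - j_{2k}` becomes `m - j_{2k-1} ≤ i < m - j_{2k}` 0-based. -/
theorem stmt15 (m n : ℕ) (ℓ : Fin m → ℕ) (hmono : Monotone ℓ) :
    (∑ i : Fin m, ∑ j ∈ univ.filter (fun j : Fin (2 * n) => (j : ℕ) < ℓ i),
        (deltav m n j - epsv m n i)) =
    (∑ i : Fin m, ∑ j ∈ univ.filter (fun j : Fin (2 * n) => (j : ℕ) < 2 * (ℓ i / 2)),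
        (deltav m n j - epsv m n i)) +
    ∑ k ∈ univ.filter (fun k : Fin n =>
        jb m ℓ (2 * (k : ℕ) + 2) < jb m ℓ (2 * (k : ℕ) + 1)),
      (((jb m ℓ (2 * (k : ℕ) + 1) : ℤ) - (jb m ℓ (2 * (k : ℕ) + 2) : ℤ)) •
          deltav m n ⟨2 * (k : ℕ), by have := k.isLt; omega⟩
        - ∑ i ∈ univ.filter (fun i : Fin m =>
            m - jb m ℓ (2 * (k : ℕ) + 1) ≤ (i : ℕ) ∧
              (i : ℕ) < m - jb m ℓ (2 * (k : ℕ) + 2)),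
            epsv m n i) := by
  rw [sum_congr rfl fun i _ => sum_filter_lt_eq_sum_filter_lt_two_mul_half_add
    (fun j => deltav m n j - epsv m n i) (ℓ i), sum_add_distrib, add_right_inj,
    sum_comm' (t' := univ) (s' := fun k : Fin n => univ.filter fun i => ℓ i = 2 * (k : ℕ) + 1)
      (by simp)]
  rw [← sum_filter_of_ne (p := fun k : Fin n =>
    jb m ℓ (2 * (k : ℕ) + 2) < jb m ℓ (2 * (k : ℕ) + 1)) ?_]
  · exact sum_congr rfl fun k _ => sum_filter_eq_sub_eq_jb_smul_sub hmono _ _ _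
  · intro k _ hk
    have hpos := card_pos.2 (nonempty_of_sum_ne_zero hk)
    have hcard : _ + jb m ℓ (2 * (k : ℕ) + 2) = _ :=
      card_filter_eq_add_jb_succ ℓ (2 * (k : ℕ) + 1)
    omega
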